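/- arXiv:1001.5073 — 3 statements merged into one kernel-verified Lean document; each statement's English description precedes it below -/
import Mathlib

section
/- Let A be a real n×m matrix with n < m satisfying the URP and having orthonormal rows (A Aᵀ = I_n), let 1 ≤ n0 ≤ n, γ = γ_A(n0) (finite and positive), and suppose s0 ∈ S_x has k = ‖s0‖₀ with 0 < k < n0/(2+2γ). Let ŝ = Aᵀx (the minimum Euclidean-norm element of S_x), σ₁ = ‖ŝ‖/√(k(1+γ)), c = 2m/(2m + n0/(2+2γ) − k) (so 0 < c < 1), and σ_j = σ₁·c^{j−1} for j ≥ 1. Let P denote the orthogonal projection of ℝ^m onto the null space of A. Suppose s₁ = ŝ, and for each j ≥ 2 there is a differentiable curve α_j : [0,∞) → ℝ^m with α_j(0) = s_{j−1}, α_j′(t) = P ∇F_{γ,σ_j}(α_j(t)) for all t ≥ 0, whose limit s_j = lim_{t→∞} α_j(t) exists. Then for every j ≥ 1, F_{γ,σ_j}(s_j) ≥ m − k and ‖s_j − s0‖ ≤ √(m(γ+1))·σ_j; in particular s_j → s0 as j → ∞. -/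
open Finset
open scoped BigOperators

noncomputable section

/-- Squared Euclidean norm of a vector. -/
def nsq {ι : Type*} [Fintype ι] (s : ι → ℝ) : ℝ := ∑ i, (s i) ^ 2

/-- The Unique Representation Property: every `n × n` submatrix of `A` is invertible. -/
def URP {n m : ℕ} (A : Matrix (Fin n) (Fin m) ℝ) : Prop :=
  ∀ g : Fin n → Fin m, Function.Injective g → IsUnit (A.submatrix id g)

/-- Number of nonzero components (the ℓ⁰ "norm"). -/
def l0 {ι : Type*} [Fintype ι] (s : ι → ℝ) : ℕ :=
  (Finset.univ.filter fun i => s i ≠ 0).card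

/-- Number of components with absolute value greater than σ. -/
def l0s {ι : Type*} [Fintype ι] (s : ι → ℝ) (σ : ℝ) : ℕ :=
  (Finset.univ.filter fun i => σ < |s i|).card

/-- The set of ratios ‖π_I(s)‖²/‖π_{Iᶜ}(s)‖² over index sets `I` with `|I| ≤ n0`
and nonzero null-space vectors `s`. -/
def gammaSet {n m : ℕ} (A : Matrix (Fin n) (Fin m) ℝ) (n0 : ℕ) : Set ℝ :=
  {r | ∃ (I : Finset (Fin m)) (s : Fin m → ℝ), I.card ≤ n0 ∧ A.mulVec s = 0 ∧ s ≠ 0 ∧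
    r = (∑ i ∈ I, (s i) ^ 2) / (∑ i ∈ Iᶜ, (s i) ^ 2)}

/-- γ_A(n0), the supremum of the above set of ratios. -/
def gammaA {n m : ℕ} (A : Matrix (Fin n) (Fin m) ℝ) (n0 : ℕ) : ℝ :=
  sSup (gammaSet A n0)

/-- Square of the largest singular value of a matrix (Rayleigh quotient form). -/
def sMaxSq {p q : Type*} [Fintype p] [Fintype q] (B : Matrix p q ℝ) : ℝ :=
  sSup {r | ∃ v : q → ℝ, nsq v = 1 ∧ r = nsq (B.mulVec v)}

/-- Square of the smallest singular value of a matrix with at least as many rows as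
columns (Rayleigh quotient form). -/
def sMinSq {p q : Type*} [Fintype p] [Fintype q] (B : Matrix p q ℝ) : ℝ :=
  sInf {r | ∃ v : q → ℝ, nsq v = 1 ∧ r = nsq (B.mulVec v)}

/-- The quadratic spline f_γ. -/
def fsp (γ u : ℝ) : ℝ :=
  if |u| ≤ 1 then 1 - u ^ 2 / (1 + γ)
  else if |u| ≤ 1 + γ then (|u| - γ - 1) ^ 2 / (γ ^ 2 + γ)
  else 0

/-- F_{γ,σ}(s) = Σ_i f_γ(s_i/σ). -/
def Fsp {m : ℕ} (γ σ : ℝ) (s : Fin m → ℝ) : ℝ := ∑ i, fsp γ (s i / σ)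

/-- The piecewise second derivative g_γ of f_γ. -/
def gsp (γ u : ℝ) : ℝ :=
  if |u| ≤ 1 then -2 / (1 + γ)
  else if |u| ≤ 1 + γ then 2 / (γ ^ 2 + γ)
  else 0

/-- The derivative f_γ′. -/
def fspDeriv (γ u : ℝ) : ℝ :=
  if |u| ≤ 1 then -2 * u / (1 + γ)
  else if |u| ≤ 1 + γ then 2 * (|u| - γ - 1) / (γ ^ 2 + γ) * Real.sign u
  else 0

/-- The gradient of F_{γ,σ}: its i-th component is (1/σ)·f_γ′(s_i/σ). -/
def gradF {m : ℕ} (γ σ : ℝ) (s : Fin m → ℝ) : Fin m → ℝ :=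
  fun i => fspDeriv γ (s i / σ) / σ

/-- The lower asymmetric restricted isometry constant δ_k^{min} of `A`. -/
def aricMin {n m : ℕ} (A : Matrix (Fin n) (Fin m) ℝ) (k : ℕ) : ℝ :=
  sInf {δ : ℝ | 0 ≤ δ ∧ ∀ s : Fin m → ℝ, l0 s ≤ k → (1 - δ) * nsq s ≤ nsq (A.mulVec s)}

end

/-!
Write `D_σ(s) = m - F_{γ,σ}(s) = Σ (1 - f_γ(s_i/σ))`. Elementary properties of the spline give
`D_σ(s) ≤ ‖s‖₀`, `D_σ(s) ≤ ‖s‖²/(σ²(1+γ))`, `#{i | |s_i| ≥ σ} ≤ (1+γ) D_σ(s)` and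
`c² D_{cσ}(s) ≤ D_σ(s)` for `0 < c ≤ 1`.

Suppose `A z = A s0` and `‖s0‖₀ + (1+γ) D_σ(z) ≤ n0`. Then `J = supp s0 ∪ {i | |z_i| ≥ σ}` has at
most `n0` elements and `z - s0` lies in the null space, so `‖(z - s0)_J‖² ≤ γ ‖(z - s0)_{Jᶜ}‖²`,
while every entry of `z - s0` off `J` is below `σ`; this gives `‖z - s0‖² ≤ m(1+γ)σ²`. The same
inequality makes `F_{γ,σ}` concave on the segment from `z` to `s0`: off `J` it is the parabola
`1 - u²/(1+γ)` with curvature `-2/(1+γ)`, and on `J` the positive curvature, at most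
`2/(γ(1+γ))`, is compensated exactly thanks to the factor `γ`. Hence if `z` is stationary on the
affine space `S_x`, then `F_{γ,σ}(s0) ≤ F_{γ,σ}(z)`, i.e. `D_σ(z) ≤ ‖s0‖₀ = k`.

The projected gradient flow keeps `A α(t)` fixed and increases `F`, which is bounded by `m`, so
its limit is stationary. By the choice of `σ₁`, `D_{σ₁}(ŝ) ≤ k`; inductively, the starting point
`s_{j-1}` of the `j`-th flow has `D_{σ_j}(s_{j-1}) ≤ k/c² ≤ n0/(2+2γ)`, so its limit `s_j` again
has `D_{σ_j}(s_j) ≤ k`, and the distance bound follows.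
-/

open Filter Topology Matrix

/-- For `a ≥ 0`, `softThreshold a u ^ 2` is the squared distance from `u` to `[-a, a]`. -/
def softThreshold (a u : ℝ) : ℝ := max (u - a) 0 - max (-u - a) 0

lemma hasDerivAt_max_zero_sq (x : ℝ) :
    HasDerivAt (fun u : ℝ => max u 0 ^ 2) (2 * max x 0) x := by
  rcases lt_trichotomy x 0 with hx | rfl | hx
  · rw [max_eq_right hx.le, mul_zero]
    refine (hasDerivAt_const x (0 : ℝ)).congr_of_eventuallyEq ?_
    filter_upwards [Iio_mem_nhds hx] with u hu
    rw [max_eq_right hu.le, zero_pow two_ne_zero]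
  · have hl : HasDerivWithinAt (fun u : ℝ => max u 0 ^ 2) 0 (Set.Iic 0) 0 :=
      (hasDerivWithinAt_const 0 _ (0 : ℝ)).congr
        (fun u hu => by simp [max_eq_right (Set.mem_Iic.mp hu)]) (by simp)
    have hr : HasDerivWithinAt (fun u : ℝ => max u 0 ^ 2) 0 (Set.Ici 0) 0 :=
      ((hasDerivAt_pow 2 (0 : ℝ)).hasDerivWithinAt.congr_deriv (by simp)).congr
        (fun u hu => by simp [max_eq_left (Set.mem_Ici.mp hu)]) (by simp)
    simpa [Set.Iic_union_Ici] using hl.union hr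
  · rw [max_eq_left hx.le]
    refine ((hasDerivAt_pow 2 x).congr_deriv (by ring)).congr_of_eventuallyEq ?_
    filter_upwards [Ioi_mem_nhds hx] with u hu
    rw [max_eq_left hu.le]

lemma hasDerivAt_softThreshold_sq {a : ℝ} (ha : 0 ≤ a) (x : ℝ) :
    HasDerivAt (fun u => softThreshold a u ^ 2) (2 * softThreshold a x) x := by
  have h₁ : HasDerivAt (fun u : ℝ => max (u - a) 0 ^ 2) (2 * max (x - a) 0) x := by
    simpa [Function.comp_def] using
      (hasDerivAt_max_zero_sq (x - a)).comp x ((hasDerivAt_id x).sub_const a)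
  have h₂ : HasDerivAt (fun u : ℝ => max (-u - a) 0 ^ 2) (-(2 * max (-x - a) 0)) x := by
    simpa [Function.comp_def] using
      (hasDerivAt_max_zero_sq (-x - a)).comp x ((hasDerivAt_neg x).sub_const a)
  have hsq : (fun u => softThreshold a u ^ 2) =
      fun u : ℝ => max (u - a) 0 ^ 2 + max (-u - a) 0 ^ 2 := by
    funext u
    simp only [softThreshold, max_def]
    split_ifs <;> first | (exfalso; linarith) | ring
  rw [hsq]
  exact (h₁.add h₂).congr_deriv (by rw [softThreshold]; ring)

lemma softThreshold_sub_mul_sub_nonneg (a p q : ℝ) :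
    0 ≤ (softThreshold a q - softThreshold a p) * (q - p) := by
  simp only [softThreshold, max_def]
  split_ifs <;> nlinarith [sq_nonneg (q - p)]

lemma softThreshold_sub_mul_sub_le_sq {a : ℝ} (ha : 0 ≤ a) (p q : ℝ) :
    (softThreshold a q - softThreshold a p) * (q - p) ≤ (q - p) ^ 2 := by
  simp only [softThreshold, max_def]
  split_ifs <;> nlinarith [sq_nonneg (q - p)]

lemma fsp_eq_softThreshold {γ : ℝ} (hγ : 0 < γ) (u : ℝ) :
    fsp γ u = 1 - u ^ 2 / (1 + γ) + softThreshold 1 u ^ 2 / γ -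
      softThreshold (1 + γ) u ^ 2 / (γ * (1 + γ)) := by
  have : γ ^ 2 + γ = γ * (1 + γ) := by ring
  unfold fsp softThreshold
  rw [this]
  rcases le_total 0 u with hu | hu
  · rw [abs_of_nonneg hu]
    simp only [max_def]
    split_ifs <;> first | (exfalso; linarith) | (field_simp; ring)
  · rw [abs_of_nonpos hu]
    simp only [max_def]
    split_ifs <;> first | (exfalso; linarith) | (field_simp; ring)

lemma fspDeriv_eq_softThreshold {γ : ℝ} (hγ : 0 < γ) (u : ℝ) :
    fspDeriv γ u = -2 * u / (1 + γ) + 2 * softThreshold 1 u / γ -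
      2 * softThreshold (1 + γ) u / (γ * (1 + γ)) := by
  have : γ ^ 2 + γ = γ * (1 + γ) := by ring
  unfold fspDeriv softThreshold
  rw [this]
  rcases lt_trichotomy 0 u with hu | rfl | hu
  · rw [abs_of_pos hu, Real.sign_of_pos hu]
    simp only [max_def]
    split_ifs <;> first | (exfalso; linarith) | (field_simp; ring)
  · simp
  · rw [abs_of_neg hu, Real.sign_of_neg hu]
    simp only [max_def]
    split_ifs <;> first | (exfalso; linarith) | (field_simp; ring)

lemma hasDerivAt_fsp {γ : ℝ} (hγ : 0 < γ) (u : ℝ) : HasDerivAt (fsp γ) (fspDeriv γ u) u := by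
  rw [funext (fsp_eq_softThreshold hγ), fspDeriv_eq_softThreshold hγ]
  exact ((((hasDerivAt_pow 2 u).div_const (1 + γ)).const_sub 1).add
    ((hasDerivAt_softThreshold_sq zero_le_one u).div_const γ)).sub
    ((hasDerivAt_softThreshold_sq (by linarith) u).div_const (γ * (1 + γ))) |>.congr_deriv
    (by ring)

lemma continuous_fspDeriv {γ : ℝ} (hγ : 0 < γ) : Continuous (fspDeriv γ) := by
  rw [funext (fspDeriv_eq_softThreshold hγ)]
  unfold softThreshold
  fun_prop

lemma fsp_abs (γ u : ℝ) : fsp γ |u| = fsp γ u := by simp [fsp]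

lemma one_sub_fsp_le {γ : ℝ} (hγ : 0 < γ) (u : ℝ) : 1 - fsp γ u ≤ u ^ 2 / (1 + γ) := by
  rw [← fsp_abs, ← sq_abs]
  have ht := abs_nonneg u
  unfold fsp
  rw [abs_abs]
  split_ifs
  · simp
  · field_simp
    nlinarith [sq_nonneg ((1 + γ) * (|u| - 1))]
  · field_simp
    nlinarith

lemma inv_le_one_sub_fsp {γ : ℝ} (hγ : 0 < γ) {u : ℝ} (hu : 1 ≤ |u|) :
    (1 + γ)⁻¹ ≤ 1 - fsp γ u := by
  rw [← fsp_abs]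
  unfold fsp
  rw [abs_abs]
  split_ifs with h₁ h₂
  · rw [← sq_abs, le_antisymm h₁ hu]; field_simp; simp
  · field_simp
    nlinarith [mul_nonneg (mul_nonneg (sub_nonneg.2 hu) (by linarith : 0 ≤ 1 + 2 * γ - |u|))
      (by linarith : (0 : ℝ) ≤ 1 + γ)]
  · field_simp
    nlinarith

lemma fsp_nonneg {γ : ℝ} (hγ : 0 < γ) (u : ℝ) : 0 ≤ fsp γ u := by
  rw [← fsp_abs]
  unfold fsp
  rw [abs_abs]
  split_ifs
  · field_simp
    nlinarith [abs_nonneg u]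
  · positivity
  · rfl

lemma fsp_le_one {γ : ℝ} (hγ : 0 < γ) (u : ℝ) : fsp γ u ≤ 1 := by
  rw [← fsp_abs]
  unfold fsp
  rw [abs_abs]
  split_ifs
  · field_simp
    nlinarith [abs_nonneg u]
  · field_simp
    nlinarith
  · norm_num

lemma sq_mul_one_sub_fsp_le {γ c : ℝ} (hγ : 0 < γ) (hc₀ : 0 < c) (hc₁ : c ≤ 1) (v : ℝ) :
    c ^ 2 * (1 - fsp γ v) ≤ 1 - fsp γ (c * v) := by
  rw [← fsp_abs γ v, ← fsp_abs γ (c * v), abs_mul, abs_of_pos hc₀]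
  have hv := abs_nonneg v
  have hcv : c * |v| ≤ |v| := mul_le_of_le_one_left hv hc₁
  unfold fsp
  rw [abs_abs, abs_mul, abs_abs, abs_of_pos hc₀]
  have hγ₁ : (0 : ℝ) < 1 + γ := by linarith
  split_ifs <;> field_simp
  · nlinarith
  · linarith
  · linarith
  · nlinarith [mul_nonneg (sq_nonneg c) (sq_nonneg ((1 + γ) * (|v| - 1)))]
  · -- the difference of the two sides is `(1 + γ) (1 - c) (2 c |v| - 1 - c)`
    nlinarith [mul_nonneg (mul_nonneg hγ₁.le (sub_nonneg.2 hc₁))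
      (by linarith : (0 : ℝ) ≤ 2 * (c * |v|) - 1 - c)]
  · linarith
  · nlinarith [mul_nonneg (sq_nonneg c) (by nlinarith : (0 : ℝ) ≤ |v| ^ 2 - (1 + γ))]
  · have k₁ : (1 + γ) * (1 + γ - c * |v|) ^ 2 ≤ γ * ((1 + γ) ^ 2 - (c * |v|) ^ 2) := by
      nlinarith [mul_nonneg (by linarith : (0 : ℝ) ≤ 1 + γ - c * |v|)
        (by nlinarith : (0 : ℝ) ≤ 2 * γ * (1 + γ) - (1 + γ - c * |v|) * (1 + 2 * γ))]
    have k₂ : (1 + γ) ^ 2 * c ^ 2 ≤ (c * |v|) ^ 2 := by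
      have := mul_le_mul_of_nonneg_left (not_le.1 ‹¬|v| ≤ 1 + γ›).le hc₀.le
      nlinarith [mul_pos hc₀ hγ₁]
    nlinarith
  · nlinarith

lemma fspDeriv_sub_mul_sub_le {γ : ℝ} (hγ : 0 < γ) (p q : ℝ) :
    (fspDeriv γ q - fspDeriv γ p) * (q - p) ≤ (2 / γ - 2 / (1 + γ)) * (q - p) ^ 2 := by
  have h₁ := softThreshold_sub_mul_sub_le_sq zero_le_one p q
  have h₂ := softThreshold_sub_mul_sub_nonneg (1 + γ) p q
  have key : (fspDeriv γ q - fspDeriv γ p) * (q - p) = -(2 / (1 + γ)) * (q - p) ^ 2 +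
      2 / γ * ((softThreshold 1 q - softThreshold 1 p) * (q - p)) -
      2 / (γ * (1 + γ)) * ((softThreshold (1 + γ) q - softThreshold (1 + γ) p) * (q - p)) := by
    rw [fspDeriv_eq_softThreshold hγ, fspDeriv_eq_softThreshold hγ]
    ring
  have hγ₁ : 0 < 1 + γ := by linarith
  rw [key]
  nlinarith [mul_le_mul_of_nonneg_left h₁ (by positivity : (0 : ℝ) ≤ 2 / γ),
    mul_nonneg (by positivity : (0 : ℝ) ≤ 2 / (γ * (1 + γ))) h₂]

lemma fspDeriv_sub_mul_sub_of_abs_le_one (γ : ℝ) {p q : ℝ} (hp : |p| ≤ 1) (hq : |q| ≤ 1) :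
    (fspDeriv γ q - fspDeriv γ p) * (q - p) = -(2 / (1 + γ)) * (q - p) ^ 2 := by
  simp only [fspDeriv, if_pos hp, if_pos hq]
  ring

lemma nsq_nonneg {ι : Type*} [Fintype ι] (v : ι → ℝ) : 0 ≤ nsq v :=
  Finset.sum_nonneg fun i _ => sq_nonneg (v i)

lemma nsq_pos {ι : Type*} [Fintype ι] {v : ι → ℝ} (hv : v ≠ 0) : 0 < nsq v := by
  obtain ⟨i, hi⟩ := Function.ne_iff.1 hv
  exact Finset.sum_pos' (fun j _ => sq_nonneg _) ⟨i, Finset.mem_univ _, sq_pos_of_ne_zero hi⟩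

section Fsp

variable {m : ℕ} {γ : ℝ}

lemma sub_Fsp_eq_sum (σ : ℝ) (z : Fin m → ℝ) :
    (m : ℝ) - Fsp γ σ z = ∑ i, (1 - fsp γ (z i / σ)) := by
  simp [Fsp, Finset.sum_sub_distrib]

lemma Fsp_le (hγ : 0 < γ) (σ : ℝ) (z : Fin m → ℝ) : Fsp γ σ z ≤ m := by
  have := Finset.sum_nonneg fun i (_ : i ∈ Finset.univ) => sub_nonneg.2 (fsp_le_one hγ (z i / σ))
  linarith [sub_Fsp_eq_sum (γ := γ) σ z]

lemma sub_Fsp_le_l0 (hγ : 0 < γ) (σ : ℝ) (z : Fin m → ℝ) : (m : ℝ) - Fsp γ σ z ≤ l0 z := by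
  classical
  rw [sub_Fsp_eq_sum, l0, Finset.card_filter, Nat.cast_sum]
  refine Finset.sum_le_sum fun i _ => ?_
  by_cases hz : z i = 0
  · simp [hz, fsp]
  · simp [hz, fsp_nonneg hγ]

lemma sub_Fsp_le_nsq_div (hγ : 0 < γ) (σ : ℝ) (z : Fin m → ℝ) :
    (m : ℝ) - Fsp γ σ z ≤ nsq z / (σ ^ 2 * (1 + γ)) := by
  rw [sub_Fsp_eq_sum, nsq, Finset.sum_div]
  refine Finset.sum_le_sum fun i _ => ?_
  calc 1 - fsp γ (z i / σ) ≤ (z i / σ) ^ 2 / (1 + γ) := one_sub_fsp_le hγ _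
    _ = z i ^ 2 / (σ ^ 2 * (1 + γ)) := by rw [div_pow, div_div]

lemma sub_Fsp_sqrt_nsq_div_le (hγ : 0 < γ) {K : ℝ} (hK : 0 < K) (z : Fin m → ℝ) :
    (m : ℝ) - Fsp γ (√(nsq z) / √(K * (1 + γ))) z ≤ K := by
  refine (sub_Fsp_le_nsq_div hγ _ z).trans ?_
  rw [div_pow, Real.sq_sqrt (nsq_nonneg z), Real.sq_sqrt (by positivity)]
  rcases (nsq_nonneg z).eq_or_lt with h | h
  · simp [← h, hK.le]
  · exact le_of_eq (by field_simp)

lemma card_le_sub_Fsp {σ : ℝ} (hγ : 0 < γ) (hσ : 0 < σ) (z : Fin m → ℝ) :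
    (#{i | σ ≤ |z i|} : ℝ) ≤ (1 + γ) * ((m : ℝ) - Fsp γ σ z) := by
  have hle : (#{i | σ ≤ |z i|} : ℝ) * (1 + γ)⁻¹ ≤ (m : ℝ) - Fsp γ σ z := by
    rw [sub_Fsp_eq_sum, ← nsmul_eq_mul]
    refine (Finset.card_nsmul_le_sum _ _ _ fun i hi => ?_).trans
      (Finset.sum_le_sum_of_subset_of_nonneg (Finset.subset_univ _)
        fun i _ _ => sub_nonneg.2 (fsp_le_one hγ _))
    refine inv_le_one_sub_fsp hγ ?_
    rw [abs_div, abs_of_pos hσ, one_le_div hσ]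
    exact (Finset.mem_filter.1 hi).2
  have hγ₁ : (0 : ℝ) < 1 + γ := by linarith
  rwa [← div_eq_mul_inv, div_le_iff₀' hγ₁] at hle

lemma sq_mul_sub_Fsp_mul_le {c : ℝ} (hγ : 0 < γ) (hc₀ : 0 < c) (hc₁ : c ≤ 1) (σ : ℝ)
    (z : Fin m → ℝ) : c ^ 2 * ((m : ℝ) - Fsp γ (c * σ) z) ≤ (m : ℝ) - Fsp γ σ z := by
  rw [sub_Fsp_eq_sum, sub_Fsp_eq_sum, Finset.mul_sum]
  refine Finset.sum_le_sum fun i _ => ?_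
  have := sq_mul_one_sub_fsp_le hγ hc₀ hc₁ (z i / (c * σ))
  rwa [mul_div_assoc', mul_div_mul_left _ _ hc₀.ne'] at this

lemma hasDerivAt_Fsp_comp (hγ : 0 < γ) (σ : ℝ) {α : ℝ → Fin m → ℝ} {α' : Fin m → ℝ} {t : ℝ}
    (hα : HasDerivAt α α' t) :
    HasDerivAt (fun t => Fsp γ σ (α t)) (gradF γ σ (α t) ⬝ᵥ α') t := by
  refine (HasDerivAt.fun_sum fun i _ =>
    (hasDerivAt_fsp hγ _).comp t ((hasDerivAt_pi.1 hα i).div_const σ)).congr_deriv ?_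
  simp only [dotProduct, gradF]
  exact Finset.sum_congr rfl fun i _ => by ring

lemma continuous_Fsp (hγ : 0 < γ) (σ : ℝ) : Continuous (Fsp (m := m) γ σ) := by
  have : Continuous (fsp γ) := continuous_iff_continuousAt.2 fun u =>
    (hasDerivAt_fsp hγ u).continuousAt
  unfold Fsp
  fun_prop

lemma continuous_gradF (hγ : 0 < γ) (σ : ℝ) : Continuous (gradF (m := m) γ σ) := by
  have := continuous_fspDeriv hγ
  unfold gradF
  fun_prop

end Fsp

lemma sum_fspDeriv_sub_mul_sub_nonpos {ι : Type*} [Fintype ι] [DecidableEq ι] {γ : ℝ}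
    (hγ : 0 < γ) (p q : ι → ℝ) (J : Finset ι)
    (hJ : ∑ i ∈ J, (q i - p i) ^ 2 ≤ γ * ∑ i ∈ Jᶜ, (q i - p i) ^ 2)
    (hsmall : ∀ i ∉ J, |p i| ≤ 1 ∧ |q i| ≤ 1) :
    ∑ i, (fspDeriv γ (q i) - fspDeriv γ (p i)) * (q i - p i) ≤ 0 := by
  rw [← Finset.sum_add_sum_compl J]
  have hJle : ∑ i ∈ J, (fspDeriv γ (q i) - fspDeriv γ (p i)) * (q i - p i) ≤
      (2 / γ - 2 / (1 + γ)) * ∑ i ∈ J, (q i - p i) ^ 2 := by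
    rw [Finset.mul_sum]
    exact Finset.sum_le_sum fun i _ => fspDeriv_sub_mul_sub_le hγ _ _
  have hJc : ∑ i ∈ Jᶜ, (fspDeriv γ (q i) - fspDeriv γ (p i)) * (q i - p i) =
      -(2 / (1 + γ)) * ∑ i ∈ Jᶜ, (q i - p i) ^ 2 := by
    rw [Finset.mul_sum]
    refine Finset.sum_congr rfl fun i hi => ?_
    obtain ⟨hp, hq⟩ := hsmall i (Finset.mem_compl.1 hi)
    exact fspDeriv_sub_mul_sub_of_abs_le_one γ hp hq
  have hγ₁ : 0 < 1 + γ := by linarith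
  have hC : (2 / γ - 2 / (1 + γ)) * γ = 2 / (1 + γ) := by field_simp; ring
  have hC₀ : 0 ≤ 2 / γ - 2 / (1 + γ) := by
    rw [sub_nonneg]; exact div_le_div_of_nonneg_left zero_le_two hγ (by linarith)
  have hJ' := mul_le_mul_of_nonneg_left hJ hC₀
  rw [← mul_assoc, hC] at hJ'
  linarith

lemma abs_add_mul_le {a b τ σ : ℝ} (hτ₀ : 0 ≤ τ) (hτ₁ : τ ≤ 1) (ha : |a| ≤ σ)
    (hab : |a + b| ≤ σ) : |a + τ * b| ≤ σ := by
  rw [abs_le] at *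
  constructor <;> nlinarith [mul_nonneg hτ₀ (sub_nonneg.2 hτ₁)]

lemma Fsp_add_le_of_dotProduct_gradF_eq_zero {m : ℕ} {γ σ : ℝ} (hγ : 0 < γ) (hσ : 0 < σ)
    (y v : Fin m → ℝ) (J : Finset (Fin m))
    (hJ : ∑ i ∈ J, v i ^ 2 ≤ γ * ∑ i ∈ Jᶜ, v i ^ 2)
    (hsmall : ∀ i ∉ J, |y i| ≤ σ ∧ |y i + v i| ≤ σ)
    (hstat : gradF γ σ y ⬝ᵥ v = 0) :
    Fsp γ σ (y + v) ≤ Fsp γ σ y := by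
  have hg : ∀ τ : ℝ, HasDerivAt (fun τ : ℝ => Fsp γ σ (y + τ • v))
      (gradF γ σ (y + τ • v) ⬝ᵥ v) τ := fun τ =>
    hasDerivAt_Fsp_comp hγ σ (by simpa using ((hasDerivAt_id τ).smul_const v).const_add y)
  have hslope : ∀ τ ∈ interior (Set.Icc (0 : ℝ) 1), gradF γ σ (y + τ • v) ⬝ᵥ v ≤ 0 := by
    intro τ hτ
    rw [interior_Icc] at hτ
    obtain ⟨hτ₀, hτ₁⟩ := hτ
    have key := sum_fspDeriv_sub_mul_sub_nonpos hγ (fun i => y i / σ)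
      (fun i => (y i + τ * v i) / σ) J ?_ ?_
    · have e : τ * (gradF γ σ (y + τ • v) ⬝ᵥ v - gradF γ σ y ⬝ᵥ v) =
          ∑ i, (fspDeriv γ ((y i + τ * v i) / σ) - fspDeriv γ (y i / σ)) *
            ((y i + τ * v i) / σ - y i / σ) := by
        simp only [dotProduct, gradF, Pi.add_apply, Pi.smul_apply, smul_eq_mul,
          ← Finset.sum_sub_distrib, Finset.mul_sum]
        exact Finset.sum_congr rfl fun i _ => by ring
      rw [hstat] at e
      nlinarith
    · have e : ∀ K : Finset (Fin m), ∑ i ∈ K, ((y i + τ * v i) / σ - y i / σ) ^ 2 =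
          (τ / σ) ^ 2 * ∑ i ∈ K, v i ^ 2 := fun K => by
        rw [Finset.mul_sum]; exact Finset.sum_congr rfl fun i _ => by ring
      rw [e, e, mul_left_comm]
      exact mul_le_mul_of_nonneg_left hJ (sq_nonneg _)
    · intro i hi
      obtain ⟨hy, hyv⟩ := hsmall i hi
      rw [abs_div, abs_div, abs_of_pos hσ, div_le_one hσ, div_le_one hσ]
      exact ⟨hy, abs_add_mul_le hτ₀.le hτ₁.le hy hyv⟩
  have hanti := antitoneOn_of_hasDerivWithinAt_nonpos (convex_Icc (0 : ℝ) 1)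
    (fun τ _ => (hg τ).continuousAt.continuousWithinAt)
    (fun τ _ => (hg τ).hasDerivWithinAt) hslope
  simpa using hanti (Set.left_mem_Icc.2 zero_le_one) (Set.right_mem_Icc.2 zero_le_one) zero_le_one

/-- `γ_A(n0) ≤ γ`, stated without the supremum. -/
def NullSpaceProperty {n m : ℕ} (A : Matrix (Fin n) (Fin m) ℝ) (n0 : ℕ) (γ : ℝ) : Prop :=
  ∀ w, A *ᵥ w = 0 → ∀ I : Finset (Fin m), #I ≤ n0 → ∑ i ∈ I, w i ^ 2 ≤ γ * ∑ i ∈ Iᶜ, w i ^ 2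

namespace URP

variable {n m : ℕ} {A : Matrix (Fin n) (Fin m) ℝ}

lemma eq_zero_of_mulVec_eq_zero (hA : URP A) (hnm : n ≤ m) {w : Fin m → ℝ}
    (hw : A *ᵥ w = 0) (hsupp : l0 w ≤ n) : w = 0 := by
  obtain ⟨J, hwJ, hJ⟩ := Finset.exists_superset_card_eq hsupp (by simpa using hnm)
  set g := J.orderEmbOfFin hJ
  have hout : ∀ i ∉ Set.range g, w i = 0 := fun i hi => by
    rw [Finset.range_orderEmbOfFin] at hi
    by_contra hwi
    exact hi (hwJ (by simp [hwi]))
  have hg : A.submatrix id g *ᵥ (w ∘ g) = 0 := by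
    ext r
    rw [← congrFun hw r]
    exact Fintype.sum_of_injective g g.injective _ _
      (fun i hi => by simp [hout i hi]) fun _ => rfl
  have hwg : w ∘ g = 0 :=
    mulVec_injective_iff_isUnit.2 (hA g g.injective) (by rw [hg, mulVec_zero])
  ext i
  by_cases hi : i ∈ Set.range g
  · obtain ⟨j, rfl⟩ := hi
    exact congrFun hwg j
  · exact hout i hi

lemma nullSpaceProperty_gammaA (hA : URP A) {n0 : ℕ} (hn0 : n0 ≤ n) (hnm : n ≤ m)
    (hbdd : BddAbove (gammaSet A n0)) : NullSpaceProperty A n0 (gammaA A n0) := by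
  intro w hw I hI
  by_cases hw₀ : w = 0
  · simp [hw₀]
  -- a nonzero null vector cannot vanish off a set of at most `n` indices
  have hpos : 0 < ∑ i ∈ Iᶜ, w i ^ 2 := by
    refine (Finset.sum_nonneg fun i _ => sq_nonneg (w i)).lt_of_ne fun h => hw₀ ?_
    refine hA.eq_zero_of_mulVec_eq_zero hnm hw ((Finset.card_le_card fun i hi => ?_).trans
      (hI.trans hn0))
    by_contra hiI
    have := (Finset.sum_eq_zero_iff_of_nonneg fun i _ => sq_nonneg (w i)).1 h.symm i
      (Finset.mem_compl.2 hiI)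
    exact (Finset.mem_filter.1 hi).2 (pow_eq_zero_iff two_ne_zero |>.1 this)
  rw [← div_le_iff₀ hpos]
  exact le_csSup hbdd ⟨I, w, hI, hw, hw₀, rfl⟩

end URP

section Recovery

variable {n m n0 : ℕ} {A : Matrix (Fin n) (Fin m) ℝ} {γ σ : ℝ}

lemma exists_card_le_of_sub_Fsp_le (hγ : 0 < γ) (hσ : 0 < σ) (s0 z : Fin m → ℝ)
    (h : (l0 s0 : ℝ) + (1 + γ) * ((m : ℝ) - Fsp γ σ z) ≤ n0) :
    ∃ J : Finset (Fin m), #J ≤ n0 ∧ ∀ i ∉ J, s0 i = 0 ∧ |z i| < σ := by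
  classical
  let T : Finset (Fin m) := {i | s0 i ≠ 0}
  let B : Finset (Fin m) := {i | σ ≤ |z i|}
  refine ⟨T ∪ B, ?_, fun i hi => by simpa [T, B] using hi⟩
  have hTB : (#(T ∪ B) : ℝ) ≤ #T + #B := by exact_mod_cast Finset.card_union_le T B
  have hT : #T = l0 s0 := rfl
  have hB : (#B : ℝ) ≤ (1 + γ) * ((m : ℝ) - Fsp γ σ z) := card_le_sub_Fsp hγ hσ z
  have : (#(T ∪ B) : ℝ) ≤ n0 := by rw [hT] at hTB; linarith
  exact_mod_cast this

lemma sqrt_nsq_sub_le_of_sub_Fsp_le (hA : NullSpaceProperty A n0 γ) (hγ : 0 < γ) (hσ : 0 < σ)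
    {s0 z : Fin m → ℝ} (hz : A *ᵥ z = A *ᵥ s0)
    (h : (l0 s0 : ℝ) + (1 + γ) * ((m : ℝ) - Fsp γ σ z) ≤ n0) :
    √(nsq (z - s0)) ≤ √(m * (γ + 1)) * σ := by
  obtain ⟨J, hJcard, hout⟩ := exists_card_le_of_sub_Fsp_le hγ hσ s0 z h
  have hJ := hA (z - s0) (by rw [mulVec_sub, hz, sub_self]) J hJcard
  have hJc : ∑ i ∈ Jᶜ, (z - s0) i ^ 2 ≤ m * σ ^ 2 := by
    calc ∑ i ∈ Jᶜ, (z - s0) i ^ 2 ≤ #Jᶜ • σ ^ 2 := by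
          refine Finset.sum_le_card_nsmul _ _ _ fun i hi => ?_
          obtain ⟨hs0, hzi⟩ := hout i (Finset.mem_compl.1 hi)
          rw [Pi.sub_apply, hs0, sub_zero, ← sq_abs]
          exact pow_le_pow_left₀ (abs_nonneg _) hzi.le 2
      _ ≤ m * σ ^ 2 := by
          rw [nsmul_eq_mul]
          gcongr
          exact_mod_cast (Finset.card_le_univ _).trans_eq (Fintype.card_fin m)
  have hnsq : nsq (z - s0) ≤ m * (γ + 1) * σ ^ 2 := by
    rw [nsq, ← Finset.sum_add_sum_compl J]
    nlinarith
  calc √(nsq (z - s0)) ≤ √(m * (γ + 1) * σ ^ 2) := Real.sqrt_le_sqrt hnsq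
    _ = √(m * (γ + 1)) * σ := by rw [Real.sqrt_mul (by positivity), Real.sqrt_sq hσ.le]

lemma sub_l0_le_Fsp_of_dotProduct_gradF_eq_zero (hA : NullSpaceProperty A n0 γ) (hγ : 0 < γ)
    (hσ : 0 < σ) {s0 z : Fin m → ℝ} (hz : A *ᵥ z = A *ᵥ s0)
    (h : (l0 s0 : ℝ) + (1 + γ) * ((m : ℝ) - Fsp γ σ z) ≤ n0)
    (hstat : gradF γ σ z ⬝ᵥ (s0 - z) = 0) :
    (m : ℝ) - l0 s0 ≤ Fsp γ σ z := by
  obtain ⟨J, hJ, hout⟩ := exists_card_le_of_sub_Fsp_le hγ hσ s0 z h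
  have hle := Fsp_add_le_of_dotProduct_gradF_eq_zero hγ hσ z (s0 - z) J
    (hA (s0 - z) (by rw [mulVec_sub, hz, sub_self]) J hJ)
    (fun i hi => ⟨(hout i hi).2.le, by simp [(hout i hi).1, hσ.le]⟩) hstat
  rw [add_sub_cancel] at hle
  linarith [sub_Fsp_le_l0 hγ σ s0]

end Recovery

lemma nonpos_of_tendsto_deriv_of_le {φ φ' : ℝ → ℝ} {L M : ℝ}
    (hφ : ∀ᶠ t in atTop, HasDerivAt φ (φ' t) t) (hM : ∀ᶠ t in atTop, φ t ≤ M)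
    (hL : Tendsto φ' atTop (𝓝 L)) : L ≤ 0 := by
  by_contra! hL₀
  obtain ⟨T, hT⟩ := eventually_atTop.1
    (hφ.and (hM.and (hL.eventually (lt_mem_nhds (half_lt_self hL₀)))))
  have hψ : ∀ t, T ≤ t → HasDerivAt (fun t => φ t - L / 2 * t) (φ' t - L / 2) t := fun t ht =>
    ((hT t ht).1.sub ((hasDerivAt_id t).const_mul (L / 2))).congr_deriv (by simp)
  have hmono : MonotoneOn (fun t => φ t - L / 2 * t) (Set.Ici T) := by
    refine monotoneOn_of_hasDerivWithinAt_nonneg (convex_Ici T) (f' := fun t => φ' t - L / 2)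
      (fun t ht => (hψ t ht).continuousAt.continuousWithinAt) (fun t ht => ?_) (fun t ht => ?_)
    · rw [interior_Ici] at ht
      exact (hψ t ht.le).hasDerivWithinAt
    · rw [interior_Ici] at ht
      linarith [(hT t ht.le).2.2]
  -- moving at speed at least `L / 2`, `φ` would exceed `M` by time `t`
  set t := T + 2 * (M - φ T + 1) / L
  have hTt : T ≤ t := le_add_of_nonneg_right (div_nonneg (by linarith [(hT T le_rfl).2.1]) hL₀.le)
  have hle := hmono Set.self_mem_Ici hTt hTt
  have ht : L / 2 * (t - T) = M - φ T + 1 := by simp only [t]; field_simp; ring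
  simp only at hle
  linarith [(hT t hTt).2.1]

section GradientFlow

variable {m : ℕ} {γ σ : ℝ} {P : (Fin m → ℝ) →ₗ[ℝ] (Fin m → ℝ)} {α : ℝ → Fin m → ℝ}
  {z : Fin m → ℝ}

lemma hasDerivAt_Fsp_gradientFlow (hγ : 0 < γ) (hPidem : ∀ v, P (P v) = P v)
    (hPsymm : ∀ v w, P v ⬝ᵥ w = v ⬝ᵥ P w) {t : ℝ}
    (hα : HasDerivAt α (P (gradF γ σ (α t))) t) :
    HasDerivAt (fun t => Fsp γ σ (α t)) (P (gradF γ σ (α t)) ⬝ᵥ P (gradF γ σ (α t))) t := by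
  rw [hPsymm, hPidem]
  exact hasDerivAt_Fsp_comp hγ σ hα

lemma Fsp_le_of_tendsto_gradientFlow (hγ : 0 < γ) (hPidem : ∀ v, P (P v) = P v)
    (hPsymm : ∀ v w, P v ⬝ᵥ w = v ⬝ᵥ P w)
    (hα : ∀ t, 0 ≤ t → HasDerivAt α (P (gradF γ σ (α t))) t) (hz : Tendsto α atTop (𝓝 z)) :
    Fsp γ σ (α 0) ≤ Fsp γ σ z := by
  have hd := fun t ht => hasDerivAt_Fsp_gradientFlow hγ hPidem hPsymm (hα t ht)
  have hmono : MonotoneOn (fun t => Fsp γ σ (α t)) (Set.Ici 0) := by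
    refine monotoneOn_of_hasDerivWithinAt_nonneg (convex_Ici 0)
      (f' := fun t => P (gradF γ σ (α t)) ⬝ᵥ P (gradF γ σ (α t)))
      (fun t ht => (hd t ht).continuousAt.continuousWithinAt) (fun t ht => ?_) (fun t _ => ?_)
    · rw [interior_Ici] at ht
      exact (hd t ht.le).hasDerivWithinAt
    · exact Finset.sum_nonneg fun i _ => mul_self_nonneg _
  refine ge_of_tendsto (((continuous_Fsp hγ σ).tendsto z).comp hz) ?_
  filter_upwards [eventually_ge_atTop 0] with t ht
  exact hmono Set.self_mem_Ici ht ht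

lemma map_gradF_eq_zero_of_tendsto_gradientFlow (hγ : 0 < γ) (hPidem : ∀ v, P (P v) = P v)
    (hPsymm : ∀ v w, P v ⬝ᵥ w = v ⬝ᵥ P w)
    (hα : ∀ t, 0 ≤ t → HasDerivAt α (P (gradF γ σ (α t))) t) (hz : Tendsto α atTop (𝓝 z)) :
    P (gradF γ σ z) = 0 := by
  have hcont : Continuous fun v => P (gradF γ σ v) ⬝ᵥ P (gradF γ σ v) := by
    have := P.continuous_of_finiteDimensional.comp (continuous_gradF (m := m) hγ σ)
    exact this.dotProduct this
  refine dotProduct_self_eq_zero.1 (le_antisymm ?_ (Finset.sum_nonneg fun i _ => mul_self_nonneg _))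
  exact nonpos_of_tendsto_deriv_of_le (φ := fun t => Fsp γ σ (α t)) (M := m)
    ((eventually_ge_atTop 0).mono fun t ht =>
      hasDerivAt_Fsp_gradientFlow hγ hPidem hPsymm (hα t ht))
    (Eventually.of_forall fun t => Fsp_le hγ σ (α t)) ((hcont.tendsto z).comp hz)

lemma mulVec_eq_of_tendsto_gradientFlow {n : ℕ} {A : Matrix (Fin n) (Fin m) ℝ}
    (hPA : ∀ v, A *ᵥ P v = 0) (hα : ∀ t, 0 ≤ t → HasDerivAt α (P (gradF γ σ (α t))) t)
    (hz : Tendsto α atTop (𝓝 z)) : A *ᵥ z = A *ᵥ α 0 := by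
  have hd : ∀ t, 0 ≤ t → HasDerivAt (fun t => A *ᵥ α t) 0 t := fun t ht =>
    ((A.mulVecLin.toContinuousLinearMap.hasFDerivAt).comp_hasDerivAt t (hα t ht)).congr_deriv
      (hPA _)
  have hconst : ∀ t, 0 ≤ t → A *ᵥ α t = A *ᵥ α 0 := fun t ht =>
    constant_of_has_deriv_right_zero (fun s hs => (hd s hs.1).continuousAt.continuousWithinAt)
      (fun s hs => (hd s hs.1).hasDerivWithinAt) t ⟨ht, le_rfl⟩
  refine tendsto_nhds_unique ((A.mulVecLin.continuous_of_finiteDimensional.tendsto z).comp hz) ?_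
  exact tendsto_const_nhds.congr' ((eventually_ge_atTop 0).mono fun t ht => (hconst t ht).symm)

end GradientFlow

lemma sub_l0_le_Fsp_of_tendsto_gradientFlow {n m n0 : ℕ} {A : Matrix (Fin n) (Fin m) ℝ}
    {γ σ : ℝ} (hA : NullSpaceProperty A n0 γ) (hγ : 0 < γ) (hσ : 0 < σ)
    {P : (Fin m → ℝ) →ₗ[ℝ] (Fin m → ℝ)} (hPA : ∀ v, A *ᵥ P v = 0)
    (hPker : ∀ v, A *ᵥ v = 0 → P v = v) (hPsymm : ∀ v w, P v ⬝ᵥ w = v ⬝ᵥ P w)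
    {α : ℝ → Fin m → ℝ} (hα : ∀ t, 0 ≤ t → HasDerivAt α (P (gradF γ σ (α t))) t)
    {z : Fin m → ℝ} (hz : Tendsto α atTop (𝓝 z)) {s0 : Fin m → ℝ}
    (hα0 : A *ᵥ α 0 = A *ᵥ s0) (h : (l0 s0 : ℝ) + (1 + γ) * ((m : ℝ) - Fsp γ σ (α 0)) ≤ n0) :
    A *ᵥ z = A *ᵥ s0 ∧ (m : ℝ) - l0 s0 ≤ Fsp γ σ z := by
  have hPidem : ∀ v, P (P v) = P v := fun v => hPker _ (hPA v)
  have hAz : A *ᵥ z = A *ᵥ s0 := (mulVec_eq_of_tendsto_gradientFlow hPA hα hz).trans hα0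
  have hFz := Fsp_le_of_tendsto_gradientFlow hγ hPidem hPsymm hα hz
  have hstat : gradF γ σ z ⬝ᵥ (s0 - z) = 0 := by
    rw [← hPker (s0 - z) (by rw [mulVec_sub, hAz, sub_self]), ← hPsymm,
      map_gradF_eq_zero_of_tendsto_gradientFlow hγ hPidem hPsymm hα hz, zero_dotProduct]
  refine ⟨hAz, sub_l0_le_Fsp_of_dotProduct_gradF_eq_zero hA hγ hσ hAz ?_ hstat⟩
  nlinarith

lemma mulVec_eq_and_sub_l0_le_Fsp_of_iterate {n m n0 : ℕ} {A : Matrix (Fin n) (Fin m) ℝ}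
    {γ c : ℝ} (hA : NullSpaceProperty A n0 γ) (hγ : 0 < γ) (hc₀ : 0 < c) (hc₁ : c ≤ 1)
    {σs : ℕ → ℝ} (hσ : ∀ j, 0 < σs j) (hσs : ∀ j, 1 ≤ j → σs (j + 1) = c * σs j)
    {s0 : Fin m → ℝ} (hc : (l0 s0 : ℝ) + (1 + γ) * (l0 s0 / c ^ 2) ≤ n0)
    {P : (Fin m → ℝ) →ₗ[ℝ] (Fin m → ℝ)} (hPA : ∀ v, A *ᵥ P v = 0)
    (hPker : ∀ v, A *ᵥ v = 0 → P v = v) (hPsymm : ∀ v w, P v ⬝ᵥ w = v ⬝ᵥ P w)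
    {s : ℕ → Fin m → ℝ} (hs1 : A *ᵥ s 1 = A *ᵥ s0) (hF1 : (m : ℝ) - l0 s0 ≤ Fsp γ (σs 1) (s 1))
    {α : ℕ → ℝ → Fin m → ℝ} (hα0 : ∀ j, 2 ≤ j → α j 0 = s (j - 1))
    (hα : ∀ j, 2 ≤ j → ∀ t, 0 ≤ t → HasDerivAt (α j) (P (gradF γ (σs j) (α j t))) t)
    (hαlim : ∀ j, 2 ≤ j → Tendsto (α j) atTop (𝓝 (s j))) :
    ∀ j, 1 ≤ j → A *ᵥ s j = A *ᵥ s0 ∧ (m : ℝ) - l0 s0 ≤ Fsp γ (σs j) (s j) := by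
  intro j hj
  induction j, hj using Nat.le_induction with
  | base => exact ⟨hs1, hF1⟩
  | succ j hj ih =>
    have hj₂ : 2 ≤ j + 1 := by omega
    have hstart : α (j + 1) 0 = s j := hα0 (j + 1) hj₂
    refine sub_l0_le_Fsp_of_tendsto_gradientFlow hA hγ (hσ _) hPA hPker hPsymm (hα _ hj₂)
      (hαlim _ hj₂) (hstart ▸ ih.1) ?_
    have hscale := sq_mul_sub_Fsp_mul_le hγ hc₀ hc₁ (σs j) (s j)
    rw [← hσs j hj] at hscale
    rw [hstart]
    have hdef : (m : ℝ) - Fsp γ (σs (j + 1)) (s j) ≤ l0 s0 / c ^ 2 := by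
      rw [le_div_iff₀' (by positivity)]
      linarith [ih.2]
    nlinarith

lemma geometric_ratio_bounds {m n0 k γ : ℝ} (hγ : 0 < γ) (hk : 0 ≤ k)
    (hkn0 : k < n0 / (2 + 2 * γ)) (hn0m : n0 ≤ m) :
    0 < 2 * m / (2 * m + n0 / (2 + 2 * γ) - k) ∧ 2 * m / (2 * m + n0 / (2 + 2 * γ) - k) < 1 ∧
      k + (1 + γ) * (k / (2 * m / (2 * m + n0 / (2 + 2 * γ) - k)) ^ 2) ≤ n0 := by
  set r := n0 / (2 + 2 * γ)
  have hr : (1 + γ) * r = n0 / 2 := by simp only [r]; field_simp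
  have hrm : r ≤ m / 2 := by nlinarith
  have hden : 0 < 2 * m + r - k := by linarith
  refine ⟨div_pos (by linarith) hden, (div_lt_one hden).2 (by linarith), ?_⟩
  have hkr : k / (2 * m / (2 * m + r - k)) ^ 2 ≤ r := by
    rw [div_pow, div_div_eq_mul_div, div_le_iff₀ (by nlinarith)]
    nlinarith [mul_nonneg (sub_nonneg.2 hkn0.le) (by nlinarith : 0 ≤ 4 * m * (m - k) - k * (r - k))]
  nlinarith [mul_le_mul_of_nonneg_left hkr (by linarith : (0 : ℝ) ≤ 1 + γ)]

lemma tendsto_of_sqrt_nsq_sub_le {ι β : Type*} [Fintype ι] {l : Filter β} {s : β → ι → ℝ}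
    {s0 : ι → ℝ} {b : β → ℝ} (hb : Tendsto b l (𝓝 0)) (h : ∀ᶠ j in l, √(nsq (s j - s0)) ≤ b j) :
    Tendsto s l (𝓝 s0) := by
  refine tendsto_pi_nhds.2 fun i => tendsto_sub_nhds_zero_iff.1 <| squeeze_zero_norm' ?_ hb
  filter_upwards [h] with j hj
  rw [Real.norm_eq_abs, ← Real.sqrt_sq_eq_abs]
  refine (Real.sqrt_le_sqrt ?_).trans hj
  exact Finset.single_le_sum (f := fun i => (s j - s0) i ^ 2) (fun i _ => sq_nonneg _)
    (Finset.mem_univ i)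

theorem stmt_13_general {n m : ℕ} (hnm : n < m) (A : Matrix (Fin n) (Fin m) ℝ)
    (hURP : URP A) (horth : A * A.transpose = 1)
    (n0 : ℕ) (hn0 : n0 ≤ n)
    (γ : ℝ) (hγ : γ = gammaA A n0) (hγpos : 0 < γ) (hbdd : BddAbove (gammaSet A n0))
    (x : Fin n → ℝ) (s0 : Fin m → ℝ) (hs0x : A.mulVec s0 = x)
    (k : ℕ) (hk : k = l0 s0) (hkpos : 0 < k) (hksp : (k : ℝ) < n0 / (2 + 2 * γ))
    (shat : Fin m → ℝ) (hshat : shat = A.transpose.mulVec x)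
    (σ1 c : ℝ)
    (hσ1 : σ1 = Real.sqrt (nsq shat) / Real.sqrt (k * (1 + γ)))
    (hc : c = 2 * m / (2 * m + n0 / (2 + 2 * γ) - k))
    (σs : ℕ → ℝ) (hσs : ∀ j : ℕ, σs j = σ1 * c ^ (j - 1))
    (P : (Fin m → ℝ) →ₗ[ℝ] (Fin m → ℝ))
    (hP1 : ∀ v, A.mulVec (P v) = 0)
    (hP2 : ∀ v, A.mulVec v = 0 → P v = v)
    (hP3 : ∀ v w : Fin m → ℝ, ∑ i, P v i * w i = ∑ i, v i * P w i)
    (s : ℕ → Fin m → ℝ) (hs1 : s 1 = shat)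
    (α : ℕ → ℝ → Fin m → ℝ)
    (hα0 : ∀ j : ℕ, 2 ≤ j → α j 0 = s (j - 1))
    (hαd : ∀ j : ℕ, 2 ≤ j → ∀ t : ℝ, 0 ≤ t →
      HasDerivAt (α j) (P (gradF γ (σs j) (α j t))) t)
    (hαlim : ∀ j : ℕ, 2 ≤ j → Filter.Tendsto (α j) Filter.atTop (nhds (s j))) :
    (∀ j : ℕ, 1 ≤ j →
      (m : ℝ) - k ≤ Fsp γ (σs j) (s j) ∧
      Real.sqrt (nsq (s j - s0)) ≤ Real.sqrt (m * (γ + 1)) * σs j) ∧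
    Filter.Tendsto s Filter.atTop (nhds s0) := by
  subst hk
  have hNSP : NullSpaceProperty A n0 γ := hγ ▸ hURP.nullSpaceProperty_gammaA hn0 hnm.le hbdd
  have hk₀ : (0 : ℝ) < l0 s0 := by exact_mod_cast hkpos
  have hkn0 : (l0 s0 : ℝ) * (2 + 2 * γ) < n0 := (lt_div_iff₀ (by linarith)).1 hksp
  obtain ⟨hc₀, hc₁, hkc⟩ := hc ▸ geometric_ratio_bounds hγpos hk₀.le hksp
    (by exact_mod_cast hn0.trans hnm.le)
  have hAshat : A *ᵥ shat = x := by rw [hshat, mulVec_mulVec, horth, one_mulVec]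
  -- `s0 ≠ 0` is sparse, so `x = A s0 ≠ 0` by the URP, hence `shat ≠ 0` and `σ1 > 0`
  have hnsq : 0 < nsq shat := by
    refine nsq_pos fun h0 => (Finset.card_pos.1 hkpos).ne_empty ?_
    have hkn : l0 s0 ≤ n := by
      have : (l0 s0 : ℝ) ≤ n := by nlinarith [(Nat.cast_le (α := ℝ)).2 hn0]
      exact_mod_cast this
    simp [hURP.eq_zero_of_mulVec_eq_zero hnm.le (by rw [hs0x, ← hAshat, h0, mulVec_zero]) hkn]
  have hσ1₀ : 0 < σ1 := hσ1 ▸ div_pos (Real.sqrt_pos.2 hnsq) (Real.sqrt_pos.2 (by positivity))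
  have hσ₀ : ∀ j, 0 < σs j := fun j => hσs j ▸ mul_pos hσ1₀ (pow_pos hc₀ _)
  have hσsucc : ∀ j, 1 ≤ j → σs (j + 1) = c * σs j := fun j hj => by
    rw [hσs, hσs, show j + 1 - 1 = j - 1 + 1 by omega, pow_succ]; ring
  have hF1 : (m : ℝ) - l0 s0 ≤ Fsp γ (σs 1) (s 1) := by
    rw [hσs, hs1, Nat.sub_self, pow_zero, mul_one, hσ1]
    linarith [sub_Fsp_sqrt_nsq_div_le hγpos hk₀ shat]
  have hiter := mulVec_eq_and_sub_l0_le_Fsp_of_iterate hNSP hγpos hc₀ hc₁.le hσ₀ hσsucc hkc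
    hP1 hP2 hP3 (by rw [hs1, hAshat, hs0x]) hF1 hα0 hαd hαlim
  have hball : ∀ j, 1 ≤ j → √(nsq (s j - s0)) ≤ √(m * (γ + 1)) * σs j := fun j hj =>
    sqrt_nsq_sub_le_of_sub_Fsp_le hNSP hγpos (hσ₀ j) (hiter j hj).1
      (by nlinarith [(hiter j hj).2])
  refine ⟨fun j hj => ⟨(hiter j hj).2, hball j hj⟩,
    tendsto_of_sqrt_nsq_sub_le ?_ ((eventually_ge_atTop 1).mono hball)⟩
  simpa [hσs, mul_assoc] using ((tendsto_pow_atTop_nhds_zero_of_lt_one hc₀.le hc₁).comp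
    (tendsto_sub_atTop_nat 1)).const_mul (√(m * (γ + 1)) * σ1)

/-- convergence of asymptotic SL0 with the geometric σ-sequence
σ_j = σ₁ c^{j−1}: each outer iterate satisfies F_{γ,σ_j}(s_j) ≥ m − k and
‖s_j − s0‖ ≤ √(m(γ+1))σ_j, so s_j → s0. -/
theorem stmt_13 {n m : ℕ} (hnm : n < m) (A : Matrix (Fin n) (Fin m) ℝ)
    (hURP : URP A) (horth : A * A.transpose = 1)
    (n0 : ℕ) (hn1 : 1 ≤ n0) (hn0 : n0 ≤ n)
    (γ : ℝ) (hγ : γ = gammaA A n0) (hγpos : 0 < γ) (hbdd : BddAbove (gammaSet A n0))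
    (x : Fin n → ℝ) (s0 : Fin m → ℝ) (hs0x : A.mulVec s0 = x)
    (k : ℕ) (hk : k = l0 s0) (hkpos : 0 < k) (hksp : (k : ℝ) < n0 / (2 + 2 * γ))
    (shat : Fin m → ℝ) (hshat : shat = A.transpose.mulVec x)
    (σ1 c : ℝ)
    (hσ1 : σ1 = Real.sqrt (nsq shat) / Real.sqrt (k * (1 + γ)))
    (hc : c = 2 * m / (2 * m + n0 / (2 + 2 * γ) - k))
    (σs : ℕ → ℝ) (hσs : ∀ j : ℕ, σs j = σ1 * c ^ (j - 1))
    (P : (Fin m → ℝ) →ₗ[ℝ] (Fin m → ℝ))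
    (hP1 : ∀ v, A.mulVec (P v) = 0)
    (hP2 : ∀ v, A.mulVec v = 0 → P v = v)
    (hP3 : ∀ v w : Fin m → ℝ, ∑ i, P v i * w i = ∑ i, v i * P w i)
    (s : ℕ → Fin m → ℝ) (hs1 : s 1 = shat)
    (α : ℕ → ℝ → Fin m → ℝ)
    (hα0 : ∀ j : ℕ, 2 ≤ j → α j 0 = s (j - 1))
    (hαd : ∀ j : ℕ, 2 ≤ j → ∀ t : ℝ, 0 ≤ t →
      HasDerivAt (α j) (P (gradF γ (σs j) (α j t))) t)
    (hαlim : ∀ j : ℕ, 2 ≤ j → Filter.Tendsto (α j) Filter.atTop (nhds (s j))) :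
    (∀ j : ℕ, 1 ≤ j →
      (m : ℝ) - k ≤ Fsp γ (σs j) (s j) ∧
      Real.sqrt (nsq (s j - s0)) ≤ Real.sqrt (m * (γ + 1)) * σs j) ∧
    Filter.Tendsto s Filter.atTop (nhds s0) :=
  stmt_13_general hnm A hURP horth n0 hn0 γ hγ hγpos hbdd x s0 hs0x k hk hkpos hksp shat hshat σ1 c
    hσ1 hc σs hσs P hP1 hP2 hP3 s hs1 α hα0 hαd hαlim
end

section
/- For real numbers 0 < β ≤ α, define d(α,β) = 1 − √(β/α) − √((2β/α)·log(e/β)), and define γ(α,β) = (1+√(1/α))²/d(α,β)² if d(α,β) > 0, and γ(α,β) = +∞ otherwise (with the convention β/(2+2γ(α,β)) = 0 when γ(α,β) = +∞). Define ρ(α) = sup over 0 < β ≤ α of β/(2+2γ(α,β)). Then ρ(α) > 0 for every α > 0; in particular, for every α > 0 there exists β ∈ (0, α] with d(α,β) > 0 and β/(2+2γ(α,β)) > 0. -/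
open Finset
open scoped BigOperators

/-- d(α,β) = 1 − √(β/α) − √((2β/α)·log(e/β)). -/
noncomputable def dAB (a b : ℝ) : ℝ :=
  1 - Real.sqrt (b / a) - Real.sqrt ((2 * b / a) * Real.log (Real.exp 1 / b))

/-- γ(α,β) = (1+√(1/α))²/d(α,β)² (meaningful when d(α,β) > 0). -/
noncomputable def gAB (a b : ℝ) : ℝ := (1 + Real.sqrt (1 / a)) ^ 2 / (dAB a b) ^ 2

/-- β/(2+2γ(α,β)), with the convention that it is 0 when γ(α,β) = +∞
(i.e. when d(α,β) ≤ 0). -/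
noncomputable def qAB (a b : ℝ) : ℝ := if 0 < dAB a b then b / (2 + 2 * gAB a b) else 0

/-- ρ(α) = sup over 0 < β ≤ α of β/(2+2γ(α,β)). -/
noncomputable def rhoA (a : ℝ) : ℝ := sSup {r : ℝ | ∃ b : ℝ, 0 < b ∧ b ≤ a ∧ r = qAB a b}

/-!
As `β → 0⁺` both `β/α` and `(2β/α)·log(e/β) = (2/α)(β − β log β)` tend to `0`, so `d(α,β) → 1`.
Hence `d(α,β) > 0` for all small `β ∈ (0, α]`, and for such `β` the quotient `β/(2+2γ(α,β))` is
positive; since all these quotients are at most `α/2`, their supremum `ρ(α)` dominates it.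
-/

open Filter Topology

lemma tendsto_dAB_nhdsGT_zero (a : ℝ) : Tendsto (dAB a) (𝓝[>] 0) (𝓝 1) := by
  set g : ℝ → ℝ := fun b => 1 - √(b / a) - √(2 / a * (b - b * Real.log b))
  have hg : Continuous g := by
    fun_prop (disch := exact Real.continuous_mul_log)
  have hg0 : g 0 = 1 := by simp [g]
  have heq : g =ᶠ[𝓝[>] 0] dAB a := by
    filter_upwards [self_mem_nhdsWithin] with b (hb : 0 < b)
    simp only [g, dAB]
    rw [Real.log_div (Real.exp_pos 1).ne' hb.ne', Real.log_exp]
    ring_nf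
  exact ((hg0 ▸ hg.tendsto 0).mono_left nhdsWithin_le_nhds).congr' heq

lemma exists_dAB_pos {a : ℝ} (ha : 0 < a) : ∃ b, 0 < b ∧ b ≤ a ∧ 0 < dAB a b := by
  have hsmall : ∀ᶠ b in 𝓝[>] (0 : ℝ), b ∈ Set.Ioc 0 a := Ioc_mem_nhdsGT ha
  have hpos : ∀ᶠ b in 𝓝[>] (0 : ℝ), 0 < dAB a b :=
    (tendsto_dAB_nhdsGT_zero a).eventually (eventually_gt_nhds one_pos)
  obtain ⟨b, ⟨hb0, hba⟩, hd⟩ := (hsmall.and hpos).exists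
  exact ⟨b, hb0, hba, hd⟩

lemma qAB_pos {a b : ℝ} (hb : 0 < b) (hd : 0 < dAB a b) : 0 < qAB a b := by
  rw [qAB, if_pos hd, gAB]
  positivity

lemma qAB_le_half {a b : ℝ} (hb : 0 < b) : qAB a b ≤ b / 2 := by
  have hγ : 0 ≤ gAB a b := by unfold gAB; positivity
  unfold qAB
  split_ifs
  · exact div_le_div_of_nonneg_left hb.le two_pos (by linarith)
  · positivity

lemma qAB_le_rhoA {a b : ℝ} (hb : 0 < b) (hba : b ≤ a) : qAB a b ≤ rhoA a := by
  refine le_csSup ⟨a / 2, ?_⟩ ⟨b, hb, hba, rfl⟩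
  rintro _ ⟨b', hb', hb'a, rfl⟩
  linarith [qAB_le_half (a := a) hb']

/-- ρ(α) > 0 for every α > 0; in particular some β ∈ (0,α] has
d(α,β) > 0 and β/(2+2γ(α,β)) > 0. -/
theorem stmt_16 (a : ℝ) (ha : 0 < a) :
    0 < rhoA a ∧ ∃ b : ℝ, 0 < b ∧ b ≤ a ∧ 0 < dAB a b ∧ 0 < qAB a b := by
  obtain ⟨b, hb, hba, hd⟩ := exists_dAB_pos ha
  have hq := qAB_pos hb hd
  exact ⟨hq.trans_le (qAB_le_rhoA hb hba), b, hb, hba, hd, hq⟩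
end

section
/- Let A be a real n×m matrix with n < m satisfying the URP, let 1 ≤ n0 ≤ n, let γ = γ_A(n0) (finite and positive), let γ′ > γ, and let σ > 0. Set λ′_max = 2/(1+γ) and λ′_min = 2(γ′−γ)/((1+γ)(γ′+γ′²)). Then: (a) for every s ∈ ℝ^m and every w ∈ ℝ^m with A w = 0, −Σ_{i=1}^m g_{γ′}(s_i/σ)·w_i² ≤ λ′_max·‖w‖²; and (b) if moreover ‖s‖_{0,σ} ≤ n0, then −Σ_{i=1}^m g_{γ′}(s_i/σ)·w_i² ≥ λ′_min·‖w‖² for every w ∈ ℝ^m with A w = 0. (Equivalently, the eigenvalues of the matrix −σ²·D·H(s)·Dᵀ, where H(s) is the diagonal Hessian of F_{γ′,σ} at s and the rows of D form an orthonormal basis of null(A), are at most λ′_max always and at least λ′_min when ‖s‖_{0,σ} ≤ n0.) -/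
open Finset
open scoped BigOperators

/-! On the null space of `A` the quadratic form `-Σ g_{γ'}(s_i/σ) w_i²` weighs the coordinates
with `|s_i| ≤ σ` by `2/(1+γ')` and the at most `n0` others by at least `-2/(γ'²+γ')`. By the
definition of `γ = γ_A(n0)`, the mass of `w` on those `n0` coordinates is at most `γ` times its
mass on the rest (URP makes the latter positive for `w ≠ 0`), and the two weights then combine to
`λ'_min`. The upper bound holds termwise, since `g_{γ'} ≥ -2/(1+γ') ≥ -2/(1+γ)`. -/

open Matrix

theorem gsp_of_abs_le_one {γ u : ℝ} (hu : |u| ≤ 1) : gsp γ u = -2 / (1 + γ) := if_pos hu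

theorem gsp_le {γ : ℝ} (hγ : 0 ≤ γ) (u : ℝ) : gsp γ u ≤ 2 / (γ ^ 2 + γ) := by
  have hpos : 0 ≤ 2 / (γ ^ 2 + γ) := by positivity
  unfold gsp
  split_ifs
  · exact (div_nonpos_of_nonpos_of_nonneg (by norm_num) (by positivity)).trans hpos
  · rfl
  · exact hpos

theorem neg_two_div_le_gsp {γ γ' : ℝ} (hγ : 0 ≤ γ) (hγγ' : γ ≤ γ') (u : ℝ) :
    -(2 / (1 + γ)) ≤ gsp γ' u := by
  have hγ'0 : 0 ≤ γ' := hγ.trans hγγ'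
  have hle : 2 / (1 + γ') ≤ 2 / (1 + γ) := by gcongr
  have hpos : 0 ≤ 2 / (1 + γ) := by positivity
  unfold gsp
  split_ifs
  · rw [neg_div]; linarith
  · linarith [show 0 ≤ 2 / (γ' ^ 2 + γ') by positivity]
  · linarith

theorem neg_sum_gsp_mul_sq_le {ι : Type*} [Fintype ι] {γ γ' : ℝ} (hγ : 0 ≤ γ) (hγγ' : γ ≤ γ')
    (u w : ι → ℝ) : -∑ i, gsp γ' (u i) * w i ^ 2 ≤ 2 / (1 + γ) * nsq w := by
  rw [nsq, mul_sum, ← sum_neg_distrib]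
  gcongr with i
  nlinarith [neg_two_div_le_gsp hγ hγγ' (u i), sq_nonneg (w i)]

theorem sub_le_neg_sum_gsp_mul_sq {ι : Type*} [Fintype ι] [DecidableEq ι] {γ : ℝ} (hγ : 0 ≤ γ)
    (I : Finset ι) (u w : ι → ℝ) (hu : ∀ i ∉ I, |u i| ≤ 1) :
    2 / (1 + γ) * ∑ i ∈ Iᶜ, w i ^ 2 - 2 / (γ ^ 2 + γ) * ∑ i ∈ I, w i ^ 2 ≤
      -∑ i, gsp γ (u i) * w i ^ 2 := by
  rw [← sum_add_sum_compl I, neg_add, mul_sum, mul_sum, sub_eq_neg_add, ← sum_neg_distrib,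
    ← sum_neg_distrib, ← sum_neg_distrib]
  gcongr with i _ i hi
  · nlinarith [gsp_le hγ (u i), sq_nonneg (w i)]
  · rw [gsp_of_abs_le_one (hu i (mem_compl.mp hi)), neg_div, neg_mul, neg_neg]

theorem URP.eq_zero_of_mulVec_eq_zero_s17 {n m : ℕ} {A : Matrix (Fin n) (Fin m) ℝ} (hA : URP A)
    (hnm : n ≤ m) {w : Fin m → ℝ} (hw : A *ᵥ w = 0) {I : Finset (Fin m)} (hI : #I ≤ n)
    (hsupp : ∀ i ∉ I, w i = 0) : w = 0 := by
  obtain ⟨J, hIJ, -, hJ⟩ := exists_subsuperset_card_eq (subset_univ I) hI (by simpa using hnm)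
  set g := J.orderEmbOfFin hJ
  have hsupp' : ∀ i ∉ Set.range g, w i = 0 := fun i hi =>
    hsupp i fun hiI => hi (by simpa [g, range_orderEmbOfFin] using hIJ hiI)
  have hrestrict : A.submatrix id g *ᵥ (w ∘ g) = 0 := by
    rw [← hw]
    ext k
    exact Fintype.sum_of_injective g g.injective _ _
      (fun i hi => by rw [hsupp' i hi, mul_zero]) fun _ => rfl
  have hwg : w ∘ g = 0 :=
    mulVec_injective_iff_isUnit.mpr (hA g g.injective) (by rw [hrestrict, mulVec_zero])
  ext i
  by_cases hi : i ∈ Set.range g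
  · obtain ⟨k, rfl⟩ := hi
    exact congrFun hwg k
  · exact hsupp' i hi

theorem sum_sq_le_gammaA_mul {n m : ℕ} {A : Matrix (Fin n) (Fin m) ℝ} (hA : URP A) (hnm : n ≤ m)
    {n0 : ℕ} (hn0 : n0 ≤ n) (hbdd : BddAbove (gammaSet A n0)) {w : Fin m → ℝ} (hw : A *ᵥ w = 0)
    {I : Finset (Fin m)} (hI : #I ≤ n0) :
    ∑ i ∈ I, w i ^ 2 ≤ gammaA A n0 * ∑ i ∈ Iᶜ, w i ^ 2 := by
  by_cases hw0 : w = 0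
  · simp [hw0]
  have hpos : 0 < ∑ i ∈ Iᶜ, w i ^ 2 := by
    refine (sum_nonneg fun i _ => sq_nonneg (w i)).lt_of_ne fun h => hw0 ?_
    refine hA.eq_zero_of_mulVec_eq_zero_s17 hnm hw (hI.trans hn0) fun i hi => ?_
    exact pow_eq_zero_iff two_ne_zero |>.mp <|
      (sum_eq_zero_iff_of_nonneg fun i _ => sq_nonneg (w i)).mp h.symm i (mem_compl.mpr hi)
  rw [← div_le_iff₀ hpos]
  exact le_csSup hbdd ⟨I, w, hI, hw, hw0, rfl⟩

theorem lambdaMin_mul_add_le {γ γ' a b : ℝ} (hγ : 0 < 1 + γ) (hγ' : 0 < γ') (hba : b ≤ γ * a) :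
    2 * (γ' - γ) / ((1 + γ) * (γ' + γ' ^ 2)) * (a + b) ≤
      2 / (1 + γ') * a - 2 / (γ' ^ 2 + γ') * b := by
  have key : 2 / (1 + γ') * a - 2 / (γ' ^ 2 + γ') * b -
      2 * (γ' - γ) / ((1 + γ) * (γ' + γ' ^ 2)) * (a + b) = 2 * (γ * a - b) / ((1 + γ) * γ') := by
    field_simp
    ring
  have : 0 ≤ 2 * (γ * a - b) / ((1 + γ) * γ') := by
    apply div_nonneg <;> nlinarith
  linarith

theorem stmt_17_general {n m : ℕ} (hnm : n < m) (A : Matrix (Fin n) (Fin m) ℝ)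
    (hURP : URP A) (n0 : ℕ) (hn0 : n0 ≤ n)
    (γ : ℝ) (hγ : γ = gammaA A n0) (hγpos : 0 < γ) (hbdd : BddAbove (gammaSet A n0))
    (γ' : ℝ) (hγ' : γ < γ') (σ : ℝ) (hσ : 0 < σ) :
    (∀ (s w : Fin m → ℝ), A.mulVec w = 0 →
      -∑ i, gsp γ' (s i / σ) * (w i) ^ 2 ≤ 2 / (1 + γ) * nsq w) ∧
    ∀ (s w : Fin m → ℝ), l0s s σ ≤ n0 → A.mulVec w = 0 →
      2 * (γ' - γ) / ((1 + γ) * (γ' + γ' ^ 2)) * nsq w ≤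
        -∑ i, gsp γ' (s i / σ) * (w i) ^ 2 := by
  refine ⟨fun s w _ => neg_sum_gsp_mul_sq_le hγpos.le hγ'.le _ w, fun s w hs hw => ?_⟩
  set I := univ.filter fun i => σ < |s i|
  have hsmall : ∀ i ∉ I, |s i / σ| ≤ 1 := fun i hi => by
    rw [abs_div, abs_of_pos hσ, div_le_one hσ]
    simpa [I] using hi
  have hlarge : ∑ i ∈ I, w i ^ 2 ≤ γ * ∑ i ∈ Iᶜ, w i ^ 2 :=
    hγ ▸ sum_sq_le_gammaA_mul hURP hnm.le hn0 hbdd hw hs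
  calc 2 * (γ' - γ) / ((1 + γ) * (γ' + γ' ^ 2)) * nsq w
      = 2 * (γ' - γ) / ((1 + γ) * (γ' + γ' ^ 2)) *
          (∑ i ∈ Iᶜ, w i ^ 2 + ∑ i ∈ I, w i ^ 2) := by
        rw [nsq, ← sum_add_sum_compl I, add_comm (∑ i ∈ I, _)]
    _ ≤ 2 / (1 + γ') * ∑ i ∈ Iᶜ, w i ^ 2 - 2 / (γ' ^ 2 + γ') * ∑ i ∈ I, w i ^ 2 :=
        lambdaMin_mul_add_le (by linarith) (by linarith) hlarge
    _ ≤ -∑ i, gsp γ' (s i / σ) * w i ^ 2 :=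
        sub_le_neg_sum_gsp_mul_sq (by linarith) I _ w hsmall

/-- eigenvalue bounds for the projected Hessian of F_{γ′,σ}: the quadratic
form −Σ g_{γ′}(s_i/σ)w_i² on the null space of A is at most λ′_max·‖w‖² always, and at
least λ′_min·‖w‖² when at most n0 components of s exceed σ. -/
theorem stmt_17 {n m : ℕ} (hnm : n < m) (A : Matrix (Fin n) (Fin m) ℝ)
    (hURP : URP A) (n0 : ℕ) (hn1 : 1 ≤ n0) (hn0 : n0 ≤ n)
    (γ : ℝ) (hγ : γ = gammaA A n0) (hγpos : 0 < γ) (hbdd : BddAbove (gammaSet A n0))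
    (γ' : ℝ) (hγ' : γ < γ') (σ : ℝ) (hσ : 0 < σ) :
    (∀ (s w : Fin m → ℝ), A.mulVec w = 0 →
      -∑ i, gsp γ' (s i / σ) * (w i) ^ 2 ≤ 2 / (1 + γ) * nsq w) ∧
    ∀ (s w : Fin m → ℝ), l0s s σ ≤ n0 → A.mulVec w = 0 →
      2 * (γ' - γ) / ((1 + γ) * (γ' + γ' ^ 2)) * nsq w ≤
        -∑ i, gsp γ' (s i / σ) * (w i) ^ 2 :=
  stmt_17_general hnm A hURP n0 hn0 γ hγ hγpos hbdd γ' hγ' σ hσ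
end
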